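/- arXiv:2104.06029 — 6 statements merged into one kernel-verified Lean document; each statement's English description precedes it below -/
import Mathlib

section
/- Let X and Y be Hilbert spaces and A : X → Y a bounded linear operator with non-closed range such that the range of A contains an infinite-dimensional closed subspace. Then there exist a constant C₁ > 0 and an infinite-dimensional closed subspace X₁ of X such that ‖x‖_X ≤ C₁‖Ax‖_Y for all x ∈ X₁. -/
/-- If `A : X → Y` is a bounded linear operator between Hilbert spaces with
non-closed range whose range contains an infinite-dimensional closed subspace, then there
exist `C₁ > 0` and an infinite-dimensional closed subspace `X₁` of `X` with
`‖x‖ ≤ C₁ * ‖A x‖` for all `x ∈ X₁`. -/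
theorem stmt0 {X Y : Type*} [NormedAddCommGroup X] [InnerProductSpace ℝ X] [CompleteSpace X]
    [NormedAddCommGroup Y] [InnerProductSpace ℝ Y] [CompleteSpace Y]
    (A : X →L[ℝ] Y)
    (hnc : ¬ IsClosed ((LinearMap.range (A : X →ₗ[ℝ] Y) : Submodule ℝ Y) : Set Y))
    (Z : Submodule ℝ Y) (hZc : IsClosed (Z : Set Y)) (hZinf : ¬ FiniteDimensional ℝ Z)
    (hZr : Z ≤ LinearMap.range (A : X →ₗ[ℝ] Y)) :
    ∃ (C₁ : ℝ) (X₁ : Submodule ℝ X), 0 < C₁ ∧ IsClosed (X₁ : Set X) ∧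
      ¬ FiniteDimensional ℝ X₁ ∧ ∀ x ∈ X₁, ‖x‖ ≤ C₁ * ‖A x‖ := by
  
  set K : Submodule ℝ X := LinearMap.ker (A : X →ₗ[ℝ] Y) with hK
  have hKc : IsClosed (K : Set X) := ContinuousLinearMap.isClosed_ker A
  haveI : CompleteSpace K := hKc.completeSpace_coe
  set X₁ : Submodule ℝ X := Submodule.comap (A : X →ₗ[ℝ] Y) Z ⊓ Kᗮ with hX₁
  have hX₁c : IsClosed (X₁ : Set X) := by
    have : (X₁ : Set X) = (A ⁻¹' (Z : Set Y)) ∩ (Kᗮ : Set X) := rfl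
    rw [this]
    exact (hZc.preimage A.continuous).inter (Submodule.isClosed_orthogonal K)
  haveI : CompleteSpace X₁ := hX₁c.completeSpace_coe
  haveI : CompleteSpace Z := hZc.completeSpace_coe
  -- the map A restricted to X₁, landing in Z
  set f : X₁ →L[ℝ] Z :=
    ContinuousLinearMap.codRestrict (A.comp X₁.subtypeL) Z (fun x => x.2.1) with hf
  have hker : LinearMap.ker (f : X₁ →ₗ[ℝ] Z) = ⊥ := by
    rw [LinearMap.ker_eq_bot']
    rintro ⟨x, hxZ, hxK⟩ hx0
    have hAx : A x = 0 := congrArg Subtype.val hx0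
    have hxker : x ∈ K := hAx
    exact Subtype.ext (Submodule.disjoint_def.mp K.orthogonal_disjoint x hxker hxK)
  have hrange : LinearMap.range (f : X₁ →ₗ[ℝ] Z) = ⊤ := by
    rw [LinearMap.range_eq_top]
    rintro ⟨z, hz⟩
    obtain ⟨x, hx⟩ := hZr hz
    obtain ⟨k, hk, p, hp, hkp⟩ := K.exists_add_mem_mem_orthogonal x
    have hAp : A p = z := by
      have hAk : A k = 0 := hk
      have : A x = A k + A p := by rw [hkp]; exact A.map_add k p
      rw [hAk, zero_add] at this
      rw [← this]; exact hx
    refine ⟨⟨p, ⟨by simpa [Submodule.mem_comap, hAp] using hz, hp⟩⟩, ?_⟩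
    exact Subtype.ext hAp
  let e : X₁ ≃L[ℝ] Z := ContinuousLinearEquiv.ofBijective f hker hrange
  have hX₁inf : ¬ FiniteDimensional ℝ X₁ := by
    intro h
    exact hZinf (Module.Finite.equiv e.toLinearEquiv)
  refine ⟨‖(e.symm : Z →L[ℝ] X₁)‖ + 1, X₁, by positivity, hX₁c, hX₁inf, ?_⟩
  intro x hx
  have h1 : (⟨x, hx⟩ : X₁) = e.symm (e ⟨x, hx⟩) := (e.symm_apply_apply _).symm
  have h2 : ‖(⟨x, hx⟩ : X₁)‖ ≤ ‖(e.symm : Z →L[ℝ] X₁)‖ * ‖e ⟨x, hx⟩‖ := by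
    conv_lhs => rw [h1]
    exact (e.symm : Z →L[ℝ] X₁).le_opNorm _
  have h3 : ‖e (⟨x, hx⟩ : X₁)‖ = ‖A x‖ := rfl
  have h4 : ‖(⟨x, hx⟩ : X₁)‖ = ‖x‖ := rfl
  rw [h3, h4] at h2
  calc ‖x‖ ≤ ‖(e.symm : Z →L[ℝ] X₁)‖ * ‖A x‖ := h2
    _ ≤ (‖(e.symm : Z →L[ℝ] X₁)‖ + 1) * ‖A x‖ := by
        apply mul_le_mul_of_nonneg_right (by linarith) (norm_nonneg _)
end

section
/- The Hausdorff moment operator A : L²(0,1) → ℓ², defined by (Ax)ⱼ = ∫₀¹ t^{j−1} x(t) dt for j = 1, 2, …, is a well-defined bounded linear operator. -/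
set_option maxHeartbeats 1000000
open MeasureTheory Set
open scoped RealInnerProductSpace ENNReal

lemma cs {α : Type*} [MeasurableSpace α] {μ : Measure α} {u v : α → ℝ}
    (hu : MemLp u 2 μ) (hv : MemLp v 2 μ) :
    (∫ t, u t * v t ∂μ)^2 ≤ (∫ t, u t ^ 2 ∂μ) * (∫ t, v t ^ 2 ∂μ) := by
  set U : Lp ℝ 2 μ := hu.toLp u
  set V : Lp ℝ 2 μ := hv.toLp v
  have hUV : ∫ t, u t * v t ∂μ = ⟪U, V⟫ := by
    rw [MeasureTheory.L2.inner_def]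
    refine integral_congr_ae ?_
    filter_upwards [hu.coeFn_toLp, hv.coeFn_toLp] with t h1 h2
    simp [h1, h2, real_inner_comm]
    simp only [U, V, h1, h2, mul_comm]
  have hU2 : ∫ t, u t ^ 2 ∂μ = ‖U‖ ^ 2 := by
    rw [← real_inner_self_eq_norm_sq, MeasureTheory.L2.inner_def]
    refine integral_congr_ae ?_
    filter_upwards [hu.coeFn_toLp] with t h1
    simp [h1, sq]
    simp only [U, h1]
  have hV2 : ∫ t, v t ^ 2 ∂μ = ‖V‖ ^ 2 := by
    rw [← real_inner_self_eq_norm_sq, MeasureTheory.L2.inner_def]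
    refine integral_congr_ae ?_
    filter_upwards [hv.coeFn_toLp] with t h1
    simp [h1, sq]
    simp only [V, h1]
  rw [hUV, hU2, hV2]
  calc ⟪U, V⟫ ^ 2 ≤ (‖U‖ * ‖V‖)^2 := by
        have := abs_real_inner_le_norm U V
        nlinarith [abs_nonneg (⟪U, V⟫), sq_abs (⟪U, V⟫)]
    _ = ‖U‖^2 * ‖V‖^2 := by ring


noncomputable def momc (j : ℕ) : ℝ := ∫ s in Set.Ioo (0:ℝ) 1, s ^ j * (1-s) ^ (-(1/2):ℝ)

lemma geom_partial {r : ℝ} (h0 : 0 ≤ r) (h1 : r < 1) (n : ℕ) :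
    ∑ j ∈ Finset.range n, r ^ j ≤ (1 - r)⁻¹ := by
  rw [geom_sum_eq (by linarith), div_le_iff_of_neg (by linarith)]
  have h2 : (1-r)⁻¹ * (r-1) = -1 := by
    field_simp; rw [div_eq_iff (by linarith : (1:ℝ)-r ≠ 0)]; ring
  rw [h2]; nlinarith [pow_nonneg h0 n]

lemma hW_int : IntegrableOn (fun s : ℝ => (1-s) ^ (-(1/2):ℝ)) (Set.Ioo 0 1) volume := by
  have h : IntervalIntegrable (fun s : ℝ => (1-s) ^ (-(1/2):ℝ)) volume 0 1 := by
    have := ((intervalIntegral.intervalIntegrable_rpow' (a := 0) (b := 1) (r := -(1/2)) (by norm_num)).comp_sub_left 1).symm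
    simpa using this
  rwa [intervalIntegrable_iff_integrableOn_Ioo_of_le (by norm_num)] at h

lemma contW : ContinuousOn (fun s : ℝ => (1-s) ^ (-(1/2):ℝ)) (Set.Ioo 0 1) := by
  refine ContinuousOn.rpow_const ((continuous_const.sub continuous_id).continuousOn) ?_
  rintro s ⟨hs0, hs1⟩; left; intro h; nlinarith [sub_eq_zero.mp h]

lemma int_a {t : ℝ} (ht0 : 0 < t) (ht1 : t < 1) :
    ∫ s in Set.Ioo (0:ℝ) t, (1-s) ^ (-(3/2):ℝ) = 2 * (1-t) ^ (-(1/2):ℝ) - 2 := by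
  rw [← integral_Ioc_eq_integral_Ioo, ← intervalIntegral.integral_of_le ht0.le]
  rw [intervalIntegral.integral_comp_sub_left (fun u : ℝ => u ^ (-(3/2):ℝ)) 1]
  rw [integral_rpow (Or.inr ⟨by norm_num, by rw [Set.mem_uIcc]; push_neg; constructor <;> intro <;> nlinarith⟩)]
  rw [show (-(3/2):ℝ) + 1 = -(1/2) by norm_num]
  norm_num; ring

lemma int_b {t : ℝ} (ht0 : 0 < t) (ht1 : t < 1) :
    ∫ s in Set.Ioo t (1:ℝ), (1-s) ^ (-(1/2):ℝ) = 2 * (1-t) ^ ((1/2):ℝ) := by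
  rw [← integral_Ioc_eq_integral_Ioo, ← intervalIntegral.integral_of_le ht1.le]
  rw [intervalIntegral.integral_comp_sub_left (fun u : ℝ => u ^ (-(1/2):ℝ)) 1]
  rw [integral_rpow (Or.inl (by norm_num))]
  rw [show (-(1/2):ℝ) + 1 = (1/2) by norm_num]
  norm_num; ring

lemma schur {t : ℝ} (ht : t ∈ Set.Ioo (0:ℝ) 1) (n : ℕ) :
    ∑ j ∈ Finset.range n, momc j * t ^ j ≤ 4 * (1-t) ^ (-(1/2):ℝ) := by
  obtain ⟨ht0, ht1⟩ := ht
  have h1t : (0:ℝ) < 1 - t := by linarith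
  have hWnn : ∀ s : ℝ, s ≤ 1 → 0 ≤ (1-s) ^ (-(1/2):ℝ) := fun s hs => Real.rpow_nonneg (by linarith) _
  have hint : ∀ j : ℕ, IntegrableOn (fun s => t ^ j * (s ^ j * (1-s) ^ (-(1/2):ℝ))) (Set.Ioo 0 1) volume := by
    intro j
    refine Integrable.mono' hW_int ?_ ?_
    · exact (continuousOn_const.mul (((continuous_pow j).continuousOn).mul contW)).aestronglyMeasurable measurableSet_Ioo
    · filter_upwards [self_mem_ae_restrict measurableSet_Ioo] with s hs
      obtain ⟨hs0, hs1⟩ := hs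
      have h1 : t ^ j ≤ 1 := pow_le_one₀ ht0.le ht1.le
      have h2 : s ^ j ≤ 1 := pow_le_one₀ hs0.le hs1.le
      have h3 : 0 ≤ (1-s) ^ (-(1/2):ℝ) := hWnn s hs1.le
      rw [Real.norm_eq_abs, abs_of_nonneg (by positivity)]
      calc t ^ j * (s ^ j * (1-s) ^ (-(1/2):ℝ)) ≤ 1 * (1 * (1-s) ^ (-(1/2):ℝ)) := by
            apply mul_le_mul h1 (mul_le_mul h2 le_rfl h3 zero_le_one) (by positivity) zero_le_one
        _ = (1-s) ^ (-(1/2):ℝ) := by ring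
  set g : ℝ → ℝ := fun s => (1 - t*s)⁻¹ * (1-s) ^ (-(1/2):ℝ) with hgdef
  have hg_meas : AEStronglyMeasurable g (volume.restrict (Set.Ioo 0 1)) := by
    refine ContinuousOn.aestronglyMeasurable ?_ measurableSet_Ioo
    refine ContinuousOn.mul (ContinuousOn.inv₀ ((continuous_const.sub (continuous_mul_left t)).continuousOn) ?_) contW
    rintro s ⟨hs0, hs1⟩; intro h; nlinarith [sub_eq_zero.mp h]
  have hg_int : IntegrableOn g (Set.Ioo 0 1) volume := by
    refine Integrable.mono' (hW_int.const_mul (1-t)⁻¹) hg_meas ?_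
    filter_upwards [self_mem_ae_restrict measurableSet_Ioo] with s hs
    obtain ⟨hs0, hs1⟩ := hs
    have hts : t * s ≤ t := by nlinarith
    have h1 : (0:ℝ) < 1 - t*s := by nlinarith
    have h3 : 0 ≤ (1-s) ^ (-(1/2):ℝ) := hWnn s hs1.le
    rw [Real.norm_eq_abs, abs_of_nonneg (by positivity)]
    exact mul_le_mul (by rw [← one_div, ← one_div]; exact one_div_le_one_div_of_le h1t (by linarith)) le_rfl h3 (by positivity)
  have step1 : ∑ j ∈ Finset.range n, momc j * t ^ j
      = ∫ s in Set.Ioo (0:ℝ) 1, ∑ j ∈ Finset.range n, t ^ j * (s ^ j * (1-s) ^ (-(1/2):ℝ)) := by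
    rw [integral_finset_sum _ (fun j _ => hint j)]
    refine Finset.sum_congr rfl fun j _ => ?_
    rw [integral_const_mul, momc, mul_comm]
  have step2 : (∫ s in Set.Ioo (0:ℝ) 1, ∑ j ∈ Finset.range n, t ^ j * (s ^ j * (1-s) ^ (-(1/2):ℝ)))
      ≤ ∫ s in Set.Ioo (0:ℝ) 1, g s := by
    refine setIntegral_mono_on (integrable_finset_sum _ (fun j _ => hint j)) hg_int measurableSet_Ioo ?_
    intro s hs
    obtain ⟨hs0, hs1⟩ := hs
    have h3 : 0 ≤ (1-s) ^ (-(1/2):ℝ) := hWnn s hs1.le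
    have hts : 0 ≤ t*s := by positivity
    have hts1 : t*s < 1 := by nlinarith
    calc ∑ j ∈ Finset.range n, t ^ j * (s ^ j * (1-s) ^ (-(1/2):ℝ))
        = (∑ j ∈ Finset.range n, (t*s) ^ j) * (1-s) ^ (-(1/2):ℝ) := by
          rw [Finset.sum_mul]; refine Finset.sum_congr rfl fun j _ => by rw [mul_pow]; ring
      _ ≤ (1 - t*s)⁻¹ * (1-s) ^ (-(1/2):ℝ) := mul_le_mul_of_nonneg_right (geom_partial hts hts1 n) h3
  have hsplit : Set.Ioo (0:ℝ) 1 = Set.Ioo 0 t ∪ Set.Ico t 1 := by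
    ext s; simp only [Set.mem_Ioo, Set.mem_union, Set.mem_Ico]
    constructor
    · rintro ⟨h1, h2⟩; rcases lt_or_ge s t with h | h
      · exact Or.inl ⟨h1, h⟩
      · exact Or.inr ⟨h, h2⟩
    · rintro (⟨h1, h2⟩ | ⟨h1, h2⟩) <;> constructor <;> linarith
  have hdisj : Disjoint (Set.Ioo (0:ℝ) t) (Set.Ico t 1) := by
    rw [Set.disjoint_left]; rintro s ⟨_, h2⟩ ⟨h3, _⟩; linarith
  have hga : IntegrableOn g (Set.Ioo 0 t) volume := hg_int.mono_set (by rw [hsplit]; exact Set.subset_union_left)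
  have hgb : IntegrableOn g (Set.Ico t 1) volume := hg_int.mono_set (by rw [hsplit]; exact Set.subset_union_right)
  have hsplit_int : ∫ s in Set.Ioo (0:ℝ) 1, g s
      = (∫ s in Set.Ioo (0:ℝ) t, g s) + ∫ s in Set.Ico t 1, g s := by
    rw [hsplit, setIntegral_union hdisj measurableSet_Ico hga hgb]
  have hA_int : IntegrableOn (fun s : ℝ => (1-s) ^ (-(3/2):ℝ)) (Set.Ioo 0 t) volume := by
    refine (ContinuousOn.integrableOn_compact isCompact_Icc ?_).mono_set Set.Ioo_subset_Icc_self
    refine ContinuousOn.rpow_const ((continuous_const.sub continuous_id).continuousOn) ?_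
    rintro s ⟨hs0, hs1⟩; left; intro h; nlinarith [sub_eq_zero.mp h]
  have bounda : (∫ s in Set.Ioo (0:ℝ) t, g s) ≤ 2 * (1-t) ^ (-(1/2):ℝ) - 2 := by
    rw [← int_a ht0 ht1]
    refine setIntegral_mono_on hga hA_int measurableSet_Ioo ?_
    intro s hs
    obtain ⟨hs0, hs1⟩ := hs
    have h1s : (0:ℝ) < 1 - s := by linarith
    have hts : t * s ≤ s := by nlinarith
    have h1 : (0:ℝ) < 1 - t*s := by nlinarith
    have key : (1 - t*s)⁻¹ ≤ (1-s)⁻¹ := by rw [← one_div, ← one_div]; exact one_div_le_one_div_of_le h1s (by linarith)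
    calc g s ≤ (1-s)⁻¹ * (1-s) ^ (-(1/2):ℝ) := mul_le_mul_of_nonneg_right key (hWnn s (by linarith))
      _ = (1-s) ^ (-(3/2):ℝ) := by
          rw [← Real.rpow_neg_one (1-s), ← Real.rpow_add h1s]
          norm_num
  have boundb : (∫ s in Set.Ico t 1, g s) ≤ 2 * (1-t) ^ (-(1/2):ℝ) := by
    have hWb : IntegrableOn (fun s : ℝ => (1-s) ^ (-(1/2):ℝ)) (Set.Ico t 1) volume :=
      hW_int.mono_set (by rw [hsplit]; exact Set.subset_union_right)
    have key : ∀ s ∈ Set.Ico t (1:ℝ), g s ≤ (1-t)⁻¹ * (1-s) ^ (-(1/2):ℝ) := by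
      intro s hs
      obtain ⟨hs0, hs1⟩ := hs
      have hts : t * s ≤ t := by nlinarith
      have h1 : (0:ℝ) < 1 - t*s := by nlinarith
      exact mul_le_mul_of_nonneg_right (by rw [← one_div, ← one_div]; exact one_div_le_one_div_of_le h1t (by linarith)) (hWnn s hs1.le)
    calc (∫ s in Set.Ico t 1, g s) ≤ ∫ s in Set.Ico t 1, (1-t)⁻¹ * (1-s) ^ (-(1/2):ℝ) :=
          setIntegral_mono_on hgb (hWb.const_mul _) measurableSet_Ico key
      _ = (1-t)⁻¹ * ∫ s in Set.Ico t 1, (1-s) ^ (-(1/2):ℝ) := integral_const_mul _ _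
      _ = (1-t)⁻¹ * (2 * (1-t) ^ ((1/2):ℝ)) := by
          rw [integral_Ico_eq_integral_Ioo, int_b ht0 ht1]
      _ = 2 * (1-t) ^ (-(1/2):ℝ) := by
          rw [← Real.rpow_neg_one (1-t), ← mul_assoc, mul_comm ((1-t) ^ ((-1):ℝ)) 2, mul_assoc,
            ← Real.rpow_add h1t]
          norm_num
  calc ∑ j ∈ Finset.range n, momc j * t ^ j
      ≤ ∫ s in Set.Ioo (0:ℝ) 1, g s := step1 ▸ step2
    _ = (∫ s in Set.Ioo (0:ℝ) t, g s) + ∫ s in Set.Ico t 1, g s := hsplit_int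
    _ ≤ (2 * (1-t) ^ (-(1/2):ℝ) - 2) + 2 * (1-t) ^ (-(1/2):ℝ) := add_le_add bounda boundb
    _ ≤ 4 * (1-t) ^ (-(1/2):ℝ) := by nlinarith [Real.rpow_nonneg h1t.le (-(1/2):ℝ)]

lemma momc_def (j : ℕ) : momc j = ∫ s in Set.Ioo (0:ℝ) 1, s ^ j * (1-s) ^ (-(1/2):ℝ) := rfl

noncomputable abbrev mms : Measure ℝ := volume.restrict (Set.Ioo (0:ℝ) 1)

lemma mom_integrable (x : Lp ℝ 2 mms) (j : ℕ) :
    Integrable (fun t => t ^ j * x t) mms := by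
  have hf1 : Integrable (x : ℝ → ℝ) mms := (Lp.memLp x).integrable (by norm_num)
  refine Integrable.mono' hf1.norm ?_ ?_
  · exact (((continuous_pow j).continuousOn.aestronglyMeasurable measurableSet_Ioo)).mul
      (Lp.aestronglyMeasurable x)
  · filter_upwards [self_mem_ae_restrict measurableSet_Ioo] with t ht
    obtain ⟨ht0, ht1⟩ := ht
    have h1 : t ^ j ≤ 1 := pow_le_one₀ ht0.le ht1.le
    rw [Real.norm_eq_abs, abs_mul, abs_of_nonneg (by positivity : (0:ℝ) ≤ t ^ j)]
    calc t ^ j * |x t| ≤ 1 * |x t| :=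
          mul_le_mul_of_nonneg_right h1 (abs_nonneg _)
      _ = ‖x t‖ := by rw [one_mul, Real.norm_eq_abs]

lemma key (x : Lp ℝ 2 mms) (n : ℕ) :
    ∑ j ∈ Finset.range n, (∫ t in Set.Ioo (0:ℝ) 1, t ^ j * x t) ^ 2 ≤ 4 * ‖x‖ ^ 2 := by
  set f : ℝ → ℝ := (x : ℝ → ℝ) with hfdef
  have hf : MemLp f 2 mms := Lp.memLp x
  have hfsq : Integrable (fun t => f t ^ 2) mms := hf.integrable_sq
  have hfm : AEStronglyMeasurable f mms := hf.aestronglyMeasurable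
  have hnormsq : ∫ t, f t ^ 2 ∂mms = ‖x‖ ^ 2 := by
    rw [← real_inner_self_eq_norm_sq, MeasureTheory.L2.inner_def]
    refine integral_congr_ae (Filter.Eventually.of_forall fun t => ?_)
    simp [sq]
    rfl
  -- the weighted square integrand
  set G : ℕ → ℝ := fun j => ∫ t in Set.Ioo (0:ℝ) 1, t ^ j * (1-t) ^ ((1/2):ℝ) * f t ^ 2 with hGdef
  have hGcont : ∀ j : ℕ, ContinuousOn (fun t : ℝ => t ^ j * (1-t) ^ ((1/2):ℝ)) (Set.Ioo 0 1) := by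
    intro j
    exact (continuous_pow j).continuousOn.mul
      (ContinuousOn.rpow_const ((continuous_const.sub continuous_id).continuousOn)
        (fun s _ => Or.inr (by norm_num)))
  have hGint : ∀ j : ℕ, Integrable (fun t => t ^ j * (1-t) ^ ((1/2):ℝ) * f t ^ 2) mms := by
    intro j
    refine Integrable.mono' hfsq ?_ ?_
    · exact ((hGcont j).aestronglyMeasurable measurableSet_Ioo).mul
        ((hfm.mul hfm).congr (Filter.Eventually.of_forall fun t => by simp [Pi.mul_apply, pow_two]))
    · filter_upwards [self_mem_ae_restrict measurableSet_Ioo] with t ht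
      obtain ⟨ht0, ht1⟩ := ht
      have h1 : t ^ j ≤ 1 := pow_le_one₀ ht0.le ht1.le
      have h2 : (1-t) ^ ((1/2):ℝ) ≤ 1 :=
        Real.rpow_le_one (by linarith) (by linarith) (by norm_num)
      have h2' : (0:ℝ) ≤ (1-t) ^ ((1/2):ℝ) := Real.rpow_nonneg (by linarith) _
      rw [Real.norm_eq_abs, abs_of_nonneg (by positivity)]
      calc t ^ j * (1-t) ^ ((1/2):ℝ) * f t ^ 2 ≤ 1 * 1 * f t ^ 2 := by
            apply mul_le_mul (mul_le_mul h1 h2 h2' zero_le_one) le_rfl (sq_nonneg _) (by norm_num)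
        _ = f t ^ 2 := by ring
  -- Cauchy–Schwarz per j
  have hCS : ∀ j : ℕ, (∫ t in Set.Ioo (0:ℝ) 1, t ^ j * f t) ^ 2 ≤ momc j * G j := by
    intro j
    set u : ℝ → ℝ := fun t => Real.sqrt (t ^ j * (1-t) ^ (-(1/2):ℝ)) with hudef
    set v : ℝ → ℝ := fun t => Real.sqrt (t ^ j * (1-t) ^ ((1/2):ℝ)) * f t with hvdef
    have hucont : ContinuousOn u (Set.Ioo 0 1) :=
      Real.continuous_sqrt.comp_continuousOn ((continuous_pow j).continuousOn.mul contW)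
    have hvmeas : AEStronglyMeasurable v mms :=
      ((Real.continuous_sqrt.comp_continuousOn (hGcont j)).aestronglyMeasurable
        measurableSet_Ioo).mul hfm
    have hu : MemLp u 2 mms := by
      rw [memLp_two_iff_integrable_sq (hucont.aestronglyMeasurable measurableSet_Ioo)]
      refine Integrable.mono' hW_int ?_ ?_
      · exact ((hucont.mul hucont).aestronglyMeasurable measurableSet_Ioo).congr
          (Filter.Eventually.of_forall fun t => by rw [Pi.mul_apply]; exact (sq (u t)).symm)
      · filter_upwards [self_mem_ae_restrict measurableSet_Ioo] with t ht
        obtain ⟨ht0, ht1⟩ := ht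
        have hnn : (0:ℝ) ≤ t ^ j * (1-t) ^ (-(1/2):ℝ) := by
          have := Real.rpow_nonneg (by linarith : (0:ℝ) ≤ 1 - t) (-(1/2):ℝ)
          positivity
        have h1 : t ^ j ≤ 1 := pow_le_one₀ ht0.le ht1.le
        rw [Real.norm_eq_abs, abs_of_nonneg (sq_nonneg _), Real.sq_sqrt hnn]
        calc t ^ j * (1-t) ^ (-(1/2):ℝ) ≤ 1 * (1-t) ^ (-(1/2):ℝ) :=
              mul_le_mul_of_nonneg_right h1 (Real.rpow_nonneg (by linarith) _)
          _ = (1-t) ^ (-(1/2):ℝ) := one_mul _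
    have hv : MemLp v 2 mms := by
      rw [memLp_two_iff_integrable_sq hvmeas]
      refine Integrable.mono' hfsq ?_ ?_
      · exact (hvmeas.mul hvmeas).congr (Filter.Eventually.of_forall fun t => by
          simp only [Pi.mul_apply, hvdef]; ring)
      · filter_upwards [self_mem_ae_restrict measurableSet_Ioo] with t ht
        obtain ⟨ht0, ht1⟩ := ht
        have hnn : (0:ℝ) ≤ t ^ j * (1-t) ^ ((1/2):ℝ) := by
          have := Real.rpow_nonneg (by linarith : (0:ℝ) ≤ 1 - t) ((1/2):ℝ)
          positivity
        have h1 : t ^ j ≤ 1 := pow_le_one₀ ht0.le ht1.le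
        have h2 : (1-t) ^ ((1/2):ℝ) ≤ 1 :=
          Real.rpow_le_one (by linarith) (by linarith) (by norm_num)
        rw [Real.norm_eq_abs, abs_of_nonneg (sq_nonneg _)]
        have : v t ^ 2 = (t ^ j * (1-t) ^ ((1/2):ℝ)) * f t ^ 2 := by
          rw [hvdef]; simp only []
          rw [mul_pow, Real.sq_sqrt hnn]
        rw [this]
        calc (t ^ j * (1-t) ^ ((1/2):ℝ)) * f t ^ 2 ≤ 1 * f t ^ 2 := by
              apply mul_le_mul_of_nonneg_right _ (sq_nonneg _)
              calc t ^ j * (1-t) ^ ((1/2):ℝ) ≤ 1 * 1 := by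
                    apply mul_le_mul h1 h2 (Real.rpow_nonneg (by linarith) _) zero_le_one
                _ = 1 := one_mul 1
          _ = f t ^ 2 := one_mul _
    have huv : ∫ t, u t * v t ∂mms = ∫ t in Set.Ioo (0:ℝ) 1, t ^ j * f t := by
      refine integral_congr_ae ?_
      filter_upwards [self_mem_ae_restrict measurableSet_Ioo] with t ht
      obtain ⟨ht0, ht1⟩ := ht
      have h1t : (0:ℝ) < 1 - t := by linarith
      have hnn : (0:ℝ) ≤ t ^ j * (1-t) ^ (-(1/2):ℝ) := by
        have := Real.rpow_nonneg h1t.le (-(1/2):ℝ); positivity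
      rw [hudef, hvdef]; simp only []
      rw [← mul_assoc, ← Real.sqrt_mul hnn]
      congr 2
      rw [show t ^ j * (1-t) ^ (-(1/2):ℝ) * (t ^ j * (1-t) ^ ((1/2):ℝ))
          = (t ^ j)^2 * ((1-t) ^ (-(1/2):ℝ) * (1-t) ^ ((1/2):ℝ)) by ring,
        ← Real.rpow_add h1t]
      norm_num
      exact Real.sqrt_sq (by positivity)
    have hu2 : ∫ t, u t ^ 2 ∂mms = momc j := by
      rw [momc_def]
      refine integral_congr_ae ?_
      filter_upwards [self_mem_ae_restrict measurableSet_Ioo] with t ht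
      obtain ⟨ht0, ht1⟩ := ht
      have hnn : (0:ℝ) ≤ t ^ j * (1-t) ^ (-(1/2):ℝ) := by
        have := Real.rpow_nonneg (by linarith : (0:ℝ) ≤ 1 - t) (-(1/2):ℝ); positivity
      rw [hudef]; simp only []
      rw [Real.sq_sqrt hnn]
    have hv2 : ∫ t, v t ^ 2 ∂mms = G j := by
      rw [hGdef]
      refine integral_congr_ae ?_
      filter_upwards [self_mem_ae_restrict measurableSet_Ioo] with t ht
      obtain ⟨ht0, ht1⟩ := ht
      have hnn : (0:ℝ) ≤ t ^ j * (1-t) ^ ((1/2):ℝ) := by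
        have := Real.rpow_nonneg (by linarith : (0:ℝ) ≤ 1 - t) ((1/2):ℝ); positivity
      rw [hvdef]; simp only []
      rw [mul_pow, Real.sq_sqrt hnn]
    have := cs hu hv
    rwa [huv, hu2, hv2] at this
  -- sum the Cauchy–Schwarz bounds
  have hsum : ∑ j ∈ Finset.range n, momc j * G j ≤ 4 * ‖x‖ ^ 2 := by
    have momc_nonneg : ∀ j : ℕ, 0 ≤ momc j := by
      intro j
      rw [momc_def]
      refine setIntegral_nonneg measurableSet_Ioo fun s hs => ?_
      obtain ⟨hs0, hs1⟩ := hs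
      have := Real.rpow_nonneg (by linarith : (0:ℝ) ≤ 1 - s) (-(1/2):ℝ)
      positivity
    have e1 : ∑ j ∈ Finset.range n, momc j * G j
        = ∫ t in Set.Ioo (0:ℝ) 1, ∑ j ∈ Finset.range n,
            momc j * (t ^ j * (1-t) ^ ((1/2):ℝ) * f t ^ 2) := by
      rw [integral_finset_sum _ (fun j _ => (hGint j).const_mul _)]
      exact Finset.sum_congr rfl fun j _ => (integral_const_mul _ _).symm
    rw [e1, ← hnormsq, ← integral_const_mul]
    refine setIntegral_mono_on
      (integrable_finset_sum _ (fun j _ => (hGint j).const_mul _))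
      (hfsq.const_mul 4) measurableSet_Ioo fun t ht => ?_
    obtain ⟨ht0, ht1⟩ := ht
    have h1t : (0:ℝ) < 1 - t := by linarith
    have hs := schur ⟨ht0, ht1⟩ n
    have h2' : (0:ℝ) ≤ (1-t) ^ ((1/2):ℝ) := Real.rpow_nonneg h1t.le _
    calc ∑ j ∈ Finset.range n, momc j * (t ^ j * (1-t) ^ ((1/2):ℝ) * f t ^ 2)
        = (∑ j ∈ Finset.range n, momc j * t ^ j) * ((1-t) ^ ((1/2):ℝ) * f t ^ 2) := by
          rw [Finset.sum_mul]; exact Finset.sum_congr rfl fun j _ => by ring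
      _ ≤ (4 * (1-t) ^ (-(1/2):ℝ)) * ((1-t) ^ ((1/2):ℝ) * f t ^ 2) := by
          apply mul_le_mul_of_nonneg_right hs (by positivity)
      _ = 4 * ((1-t) ^ (-(1/2):ℝ) * (1-t) ^ ((1/2):ℝ)) * f t ^ 2 := by ring
      _ = 4 * f t ^ 2 := by rw [← Real.rpow_add h1t]; norm_num
  calc ∑ j ∈ Finset.range n, (∫ t in Set.Ioo (0:ℝ) 1, t ^ j * f t) ^ 2
      ≤ ∑ j ∈ Finset.range n, momc j * G j := Finset.sum_le_sum fun j _ => hCS j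
    _ ≤ 4 * ‖x‖ ^ 2 := hsum

lemma norm_rpow_two (a : ℝ) : ‖a‖ ^ ((2:ℝ≥0∞)).toReal = a ^ 2 := by
  have h : ((2:ℝ≥0∞)).toReal = ((2:ℕ):ℝ) := by norm_num
  rw [h, Real.rpow_natCast, Real.norm_eq_abs, sq_abs]

lemma mom_memlp (x : Lp ℝ 2 mms) :
    Memℓp (fun j : ℕ => ∫ t in Set.Ioo (0:ℝ) 1, t ^ j * x t) 2 := by
  refine memℓp_gen' (C := 4 * ‖x‖ ^ 2) ?_
  intro s
  classical
  obtain ⟨n, hn⟩ : ∃ n, s ⊆ Finset.range n := ⟨(s.sup id) + 1, fun i hi =>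
    Finset.mem_range.mpr (Nat.lt_succ_of_le (Finset.le_sup (f := id) hi))⟩
  calc ∑ i ∈ s, ‖∫ t in Set.Ioo (0:ℝ) 1, t ^ i * x t‖ ^ ((2:ℝ≥0∞)).toReal
      = ∑ i ∈ s, (∫ t in Set.Ioo (0:ℝ) 1, t ^ i * x t) ^ 2 :=
        Finset.sum_congr rfl fun i _ => norm_rpow_two _
    _ ≤ ∑ i ∈ Finset.range n, (∫ t in Set.Ioo (0:ℝ) 1, t ^ i * x t) ^ 2 :=
        Finset.sum_le_sum_of_subset_of_nonneg hn (fun i _ _ => sq_nonneg _)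
    _ ≤ 4 * ‖x‖ ^ 2 := key x n

noncomputable def momT : Lp ℝ 2 mms →ₗ[ℝ] lp (fun _ : ℕ => ℝ) 2 where
  toFun x := ⟨fun j : ℕ => ∫ t in Set.Ioo (0:ℝ) 1, t ^ j * x t, mom_memlp x⟩
  map_add' x y := by
    ext j
    have h1 : (fun t : ℝ => t ^ j * (↑(x + y) : ℝ → ℝ) t)
        =ᵐ[mms] fun t => t ^ j * x t + t ^ j * y t := by
      filter_upwards [Lp.coeFn_add x y] with t ht
      rw [ht]; simp; ring
    simp only [lp.coeFn_add, Pi.add_apply]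
    calc (∫ t in Set.Ioo (0:ℝ) 1, t ^ j * (↑(x + y) : ℝ → ℝ) t)
        = ∫ t in Set.Ioo (0:ℝ) 1, (t ^ j * x t + t ^ j * y t) := integral_congr_ae h1
      _ = (∫ t in Set.Ioo (0:ℝ) 1, t ^ j * x t) + ∫ t in Set.Ioo (0:ℝ) 1, t ^ j * y t :=
          integral_add (mom_integrable x j) (mom_integrable y j)
  map_smul' c x := by
    ext j
    have h1 : (fun t : ℝ => t ^ j * (↑(c • x) : ℝ → ℝ) t)
        =ᵐ[mms] fun t => c * (t ^ j * x t) := by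
      filter_upwards [Lp.coeFn_smul c x] with t ht
      rw [ht]; simp; ring
    simp only [RingHom.id_apply, lp.coeFn_smul, Pi.smul_apply, smul_eq_mul]
    calc (∫ t in Set.Ioo (0:ℝ) 1, t ^ j * (↑(c • x) : ℝ → ℝ) t)
        = ∫ t in Set.Ioo (0:ℝ) 1, c * (t ^ j * x t) := integral_congr_ae h1
      _ = c * ∫ t in Set.Ioo (0:ℝ) 1, t ^ j * x t := integral_const_mul _ _

/-- The Hausdorff moment operator `A : L²(0,1) → ℓ²`, with
`(A x)_j = ∫₀¹ t^(j-1) x(t) dt` for `j = 1, 2, …` (here indexed by `j : ℕ` starting at `0`,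
so that `(A x)_j = ∫₀¹ t^j x(t) dt`), is a well-defined bounded linear operator. -/
theorem stmt2 :
    ∃ A : Lp ℝ 2 (volume.restrict (Set.Ioo (0:ℝ) 1)) →L[ℝ] lp (fun _ : ℕ => ℝ) 2,
      ∀ (x : Lp ℝ 2 (volume.restrict (Set.Ioo (0:ℝ) 1))) (j : ℕ),
        (A x : ℕ → ℝ) j = ∫ t in Set.Ioo (0:ℝ) 1, t ^ j * x t := by
  refine ⟨momT.mkContinuous 2 fun x => ?_, fun x j => rfl⟩
  refine lp.norm_le_of_forall_sum_le (by norm_num) (by positivity) fun s => ?_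
  classical
  obtain ⟨n, hn⟩ : ∃ n, s ⊆ Finset.range n := ⟨(s.sup id) + 1, fun i hi =>
    Finset.mem_range.mpr (Nat.lt_succ_of_le (Finset.le_sup (f := id) hi))⟩
  calc ∑ i ∈ s, ‖(momT x : ℕ → ℝ) i‖ ^ ((2:ℝ≥0∞)).toReal
      = ∑ i ∈ s, (∫ t in Set.Ioo (0:ℝ) 1, t ^ i * x t) ^ 2 :=
        Finset.sum_congr rfl fun i _ => norm_rpow_two _
    _ ≤ ∑ i ∈ Finset.range n, (∫ t in Set.Ioo (0:ℝ) 1, t ^ i * x t) ^ 2 :=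
        Finset.sum_le_sum_of_subset_of_nonneg hn (fun i _ _ => sq_nonneg _)
    _ ≤ 4 * ‖x‖ ^ 2 := key x n
    _ = (2 * ‖x‖) ^ ((2:ℝ≥0∞)).toReal := by
        rw [show ((2:ℝ≥0∞)).toReal = ((2:ℕ):ℝ) by norm_num, Real.rpow_natCast]; ring
end

section
/- The adjoint of the Hausdorff moment operator A : L²(0,1) → ℓ² is the operator A* : ℓ² → L²(0,1) given by (A*y)(t) = Σ_{j=1}^∞ yⱼ t^{j−1}, and this series converges in L²(0,1) for every y ∈ ℓ². -/
open MeasureTheory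

/-- The adjoint of the Hausdorff moment operator `A : L²(0,1) → ℓ²` is given by
`(A* y)(t) = ∑_{j=1}^∞ y_j t^(j-1)` (indexing from `0`: `∑_{j} y_j t^j`), the series converging
in `L²(0,1)` for every `y ∈ ℓ²`.  Here `M j` denotes the monomial `t ↦ t^j` as an element of
`L²(0,1)`. -/
theorem stmt4
    (A : Lp ℝ 2 (volume.restrict (Set.Ioo (0:ℝ) 1)) →L[ℝ] lp (fun _ : ℕ => ℝ) 2)
    (hA : ∀ (x : Lp ℝ 2 (volume.restrict (Set.Ioo (0:ℝ) 1))) (j : ℕ),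
      (A x : ℕ → ℝ) j = ∫ t in Set.Ioo (0:ℝ) 1, t ^ j * x t)
    (M : ℕ → Lp ℝ 2 (volume.restrict (Set.Ioo (0:ℝ) 1)))
    (hM : ∀ j : ℕ,
      (M j : ℝ → ℝ) =ᵐ[volume.restrict (Set.Ioo (0:ℝ) 1)] fun t => t ^ j) :
    ∀ y : lp (fun _ : ℕ => ℝ) 2,
      HasSum (fun j : ℕ => (y : ℕ → ℝ) j • M j) (ContinuousLinearMap.adjoint A y) := by
  intro y
  -- key: adjoint of A sends the standard basis vector e_j to M j
  have key : ∀ j : ℕ, (ContinuousLinearMap.adjoint A) (lp.single 2 j (1:ℝ)) = M j := by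
    intro j
    apply ext_inner_right ℝ
    intro x
    rw [ContinuousLinearMap.adjoint_inner_left, lp.inner_single_left]
    have h1 : (inner ℝ (M j) x : ℝ) = ∫ t in Set.Ioo (0:ℝ) 1, t ^ j * x t := by
      rw [L2.inner_def]
      refine integral_congr_ae ?_
      filter_upwards [hM j] with t ht
      simp [ht, RCLike.inner_apply, mul_comm]
    rw [h1, ← hA x j]
    simp [RCLike.inner_apply]
  have hy : HasSum (fun j : ℕ => lp.single 2 j ((y : ℕ → ℝ) j)) y :=
    lp.hasSum_single (by norm_num) y
  have h2 := (ContinuousLinearMap.adjoint A).hasSum hy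
  refine HasSum.congr_fun h2 fun j => ?_
  have : lp.single (E := fun _ : ℕ => ℝ) 2 j ((y : ℕ → ℝ) j)
      = (y : ℕ → ℝ) j • lp.single 2 j (1:ℝ) := by
    rw [← lp.single_smul]; simp
  rw [this, _root_.map_smul, key j]
end

section
/- Let eᵢ be an orthonormal sequence in L²(0,1) that is uniformly bounded in L^∞(0,1), i.e. ‖eᵢ‖_∞ ≤ C for all i. Then ‖Aeᵢ‖_{ℓ²} → 0 as i → ∞, where A is the Hausdorff moment operator. Consequently, the inverse of A (on its range) is unbounded and the Hausdorff moment problem is ill-posed. -/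
open MeasureTheory Filter
open scoped ENNReal

lemma stmt6_aux_finite : IsFiniteMeasure (volume.restrict (Set.Ioo (0:ℝ) 1)) := by
  constructor
  rw [Measure.restrict_apply_univ]
  simp [Real.volume_Ioo]

lemma stmt6_aux_mem (j : ℕ) :
    MemLp (fun t : ℝ => t ^ j) 2 (volume.restrict (Set.Ioo (0:ℝ) 1)) := by
  haveI := stmt6_aux_finite
  refine MemLp.of_bound (continuous_pow j).aestronglyMeasurable 1 ?_
  filter_upwards [ae_restrict_mem measurableSet_Ioo] with t ht
  rw [Real.norm_eq_abs, abs_pow]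
  exact pow_le_one₀ (abs_nonneg t) (by rw [abs_of_pos ht.1]; exact ht.2.le)

noncomputable def stmt6_g (j : ℕ) : Lp ℝ 2 (volume.restrict (Set.Ioo (0:ℝ) 1)) :=
  (stmt6_aux_mem j).toLp _

lemma stmt6_aux_inner (x : Lp ℝ 2 (volume.restrict (Set.Ioo (0:ℝ) 1))) (j : ℕ) :
    (∫ t in Set.Ioo (0:ℝ) 1, t ^ j * x t) = (inner ℝ x (stmt6_g j) : ℝ) := by
  rw [real_inner_comm, L2.inner_def]
  refine integral_congr_ae ?_
  filter_upwards [(stmt6_aux_mem j).coeFn_toLp] with t ht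
  simp [stmt6_g, RCLike.inner_apply, ht, mul_comm]

lemma stmt6_aux_bnd (x : Lp ℝ 2 (volume.restrict (Set.Ioo (0:ℝ) 1))) (j : ℕ) (C : ℝ)
    (hC : 0 ≤ C)
    (hbound : ∀ᵐ t ∂(volume.restrict (Set.Ioo (0:ℝ) 1)), |(x : ℝ → ℝ) t| ≤ C) :
    |∫ t in Set.Ioo (0:ℝ) 1, t ^ j * x t| ≤ C / ((j : ℝ) + 1) := by
  have h1 : ‖∫ t in Set.Ioo (0:ℝ) 1, t ^ j * (x : ℝ → ℝ) t‖
      ≤ ∫ t in Set.Ioo (0:ℝ) 1, ‖t ^ j * (x : ℝ → ℝ) t‖ :=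
    norm_integral_le_integral_norm _
  have hint : IntegrableOn (fun t : ℝ => C * t ^ j) (Set.Ioo (0:ℝ) 1) volume :=
    ((continuous_const.mul (continuous_pow j)).integrableOn_Icc).mono_set
      Set.Ioo_subset_Icc_self
  have h2 : (∫ t in Set.Ioo (0:ℝ) 1, ‖t ^ j * (x : ℝ → ℝ) t‖)
      ≤ ∫ t in Set.Ioo (0:ℝ) 1, C * t ^ j := by
    refine integral_mono_of_nonneg (Eventually.of_forall fun t => norm_nonneg _) hint ?_
    filter_upwards [hbound, ae_restrict_mem measurableSet_Ioo] with t ht htm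
    rw [Real.norm_eq_abs, abs_mul, abs_pow, abs_of_pos htm.1, mul_comm]
    exact mul_le_mul ht le_rfl (pow_nonneg htm.1.le j) hC
  have h3 : (∫ t in Set.Ioo (0:ℝ) 1, C * t ^ j) = C / ((j : ℝ) + 1) := by
    rw [← integral_Ioc_eq_integral_Ioo,
      ← intervalIntegral.integral_of_le (by norm_num : (0:ℝ) ≤ 1),
      intervalIntegral.integral_const_mul, integral_pow]
    ring
  calc |∫ t in Set.Ioo (0:ℝ) 1, t ^ j * (x : ℝ → ℝ) t| ≤ _ := h1
    _ ≤ _ := h2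
    _ = _ := h3

/-- If `(eᵢ)` is an orthonormal sequence in `L²(0,1)` uniformly bounded in
`L^∞(0,1)` by `C`, then `‖A eᵢ‖_{ℓ²} → 0`, where `A` is the Hausdorff moment operator.
Consequently the inverse of `A` on its range is unbounded, i.e. there is no constant `K`
with `‖x‖ ≤ K ‖A x‖` for all `x`; the Hausdorff moment problem is ill-posed. -/
theorem stmt6
    (A : Lp ℝ 2 (volume.restrict (Set.Ioo (0:ℝ) 1)) →L[ℝ] lp (fun _ : ℕ => ℝ) 2)
    (hA : ∀ (x : Lp ℝ 2 (volume.restrict (Set.Ioo (0:ℝ) 1))) (j : ℕ),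
      (A x : ℕ → ℝ) j = ∫ t in Set.Ioo (0:ℝ) 1, t ^ j * x t)
    (e : ℕ → Lp ℝ 2 (volume.restrict (Set.Ioo (0:ℝ) 1)))
    (he : Orthonormal ℝ e) (C : ℝ)
    (hbound : ∀ i : ℕ,
      ∀ᵐ t ∂(volume.restrict (Set.Ioo (0:ℝ) 1)), |(e i : ℝ → ℝ) t| ≤ C) :
    Tendsto (fun i : ℕ => ‖A (e i)‖) atTop (nhds 0) ∧
      ¬ ∃ K : ℝ, ∀ x : Lp ℝ 2 (volume.restrict (Set.Ioo (0:ℝ) 1)),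
        ‖x‖ ≤ K * ‖A x‖ := by
  set C' : ℝ := max C 0 with hC'
  have hC'0 : 0 ≤ C' := le_max_right _ _
  have hbound' : ∀ i : ℕ,
      ∀ᵐ t ∂(volume.restrict (Set.Ioo (0:ℝ) 1)), |(e i : ℝ → ℝ) t| ≤ C' := by
    intro i
    filter_upwards [hbound i] with t ht using ht.trans (le_max_left _ _)
  -- squares tend to zero pointwise in j (Bessel)
  have hsq : ∀ j, Tendsto (fun i => ((A (e i) : ℕ → ℝ) j) ^ 2) atTop (nhds 0) := by
    intro j
    have hs : Summable fun i => ‖(inner ℝ (e i) (stmt6_g j) : ℝ)‖ ^ 2 :=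
      he.inner_products_summable _
    refine hs.tendsto_atTop_zero.congr fun i => ?_
    rw [Real.norm_eq_abs, sq_abs, hA, stmt6_aux_inner]
  -- uniform bound
  have hbnd : ∀ i j, |(A (e i) : ℕ → ℝ) j| ≤ C' / ((j : ℝ) + 1) := by
    intro i j
    rw [hA]
    exact stmt6_aux_bnd (e i) j C' hC'0 (hbound' i)
  -- summable bound
  have hsummable : Summable (fun j : ℕ => (C' / ((j : ℝ) + 1)) ^ 2) := by
    have h := Real.summable_one_div_nat_pow.mpr (by norm_num : 1 < 2)
    have h2 := (summable_nat_add_iff 1).mpr h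
    refine ((h2.mul_left (C' ^ 2)).congr fun j => ?_)
    push_cast
    rw [div_pow]
    ring
  -- sum of squares tends to zero
  have hsum : Tendsto (fun i => ∑' j, ((A (e i) : ℕ → ℝ) j) ^ 2) atTop (nhds 0) := by
    have := tendsto_tsum_of_dominated_convergence
      (f := fun i j => ((A (e i) : ℕ → ℝ) j) ^ 2)
      (g := fun _ => (0:ℝ)) hsummable hsq (Eventually.of_forall fun i j => by
        rw [Real.norm_eq_abs, abs_pow]
        exact pow_le_pow_left₀ (abs_nonneg _) (hbnd i j) 2)
    simpa using this
  -- norms of A(e i)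
  have hnorm : ∀ i, ‖A (e i)‖ = Real.sqrt (∑' j, ((A (e i) : ℕ → ℝ) j) ^ 2) := by
    intro i
    have hp : (0:ℝ) < (2 : ℝ≥0∞).toReal := by norm_num
    have h2 : ‖A (e i)‖ ^ ((2 : ℝ≥0∞).toReal) = ∑' j, ((A (e i) : ℕ → ℝ) j) ^ 2 := by
      rw [lp.norm_rpow_eq_tsum hp (A (e i))]
      refine tsum_congr fun j => ?_
      rw [show (2 : ℝ≥0∞).toReal = ((2:ℕ):ℝ) by norm_num, Real.rpow_natCast,
        Real.norm_eq_abs, sq_abs]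
    rw [← h2, show (2 : ℝ≥0∞).toReal = ((2:ℕ):ℝ) by norm_num, Real.rpow_natCast,
      Real.sqrt_sq (norm_nonneg _)]
  have hmain : Tendsto (fun i : ℕ => ‖A (e i)‖) atTop (nhds 0) := by
    have := (Real.continuous_sqrt.tendsto 0).comp hsum
    rw [Real.sqrt_zero] at this
    exact this.congr fun i => (hnorm i).symm
  refine ⟨hmain, ?_⟩
  rintro ⟨K, hK⟩
  have h1 : ∀ i : ℕ, (1:ℝ) ≤ K * ‖A (e i)‖ := by
    intro i
    have := hK (e i)
    rwa [he.1 i] at this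
  have h2 : Tendsto (fun i : ℕ => K * ‖A (e i)‖) atTop (nhds 0) := by
    simpa using hmain.const_mul K
  have := ge_of_tendsto' h2 h1
  linarith
end

section
/- For the functions xᵢ(t) = √i · tⁱ on (0,1), one has ‖xᵢ‖_{L²(0,1)} ≤ 1/√2 for all i ≥ 1, each component (Axᵢ)ⱼ = √i/(i+j) tends to 0 as i → ∞, yet ‖Axᵢ‖²_{ℓ²} = i·Σ_{j=i+1}^∞ 1/j² ≥ i/(i+1) → 1. Consequently (Axᵢ) has no norm-convergent subsequence in ℓ², and the Hausdorff moment operator A is not compact. -/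
open MeasureTheory Filter

lemma stmt7_intpow (n : ℕ) : ∫ t in Set.Ioo (0:ℝ) 1, t ^ n = 1/((n:ℝ)+1) := by
  rw [← integral_Ioc_eq_integral_Ioo, ← intervalIntegral.integral_of_le zero_le_one,
    integral_pow]
  simp

lemma stmt7_tel (i : ℕ) : 1/((i:ℝ)+1) ≤ ∑' k : ℕ, 1 / ((i:ℝ)+1+k)^2 := by
  set c : ℝ := (i:ℝ)+1 with hc
  set g : ℕ → ℝ := fun k => 1/(c + k) with hg
  have hc1 : 1 ≤ c := by rw [hc]; have := Nat.cast_nonneg (α := ℝ) i; linarith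
  have hck : ∀ k : ℕ, 1 ≤ c + k := fun k => le_add_of_le_of_nonneg hc1 (by positivity)
  have hpos : ∀ k : ℕ, (0:ℝ) < c + k := fun k => lt_of_lt_of_le one_pos (hck k)
  have hdiff : ∀ k : ℕ, g k - g (k+1) = 1/((c+k)*(c+k+1)) := by
    intro k
    have h1 := hpos k
    have h2 := hpos (k+1)
    push_cast at h2 ⊢
    rw [hg]
    simp only
    push_cast
    rw [div_sub_div _ _ h1.ne' h2.ne']
    congr 1 <;> ring
  have hnn : ∀ k : ℕ, 0 ≤ g k - g (k+1) := by
    intro k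
    rw [hdiff k]
    positivity
  have htel : HasSum (fun k : ℕ => g k - g (k+1)) (1/c) := by
    rw [hasSum_iff_tendsto_nat_of_nonneg hnn]
    have heq : ∀ n : ℕ, ∑ k ∈ Finset.range n, (g k - g (k+1)) = 1/c - g n := by
      intro n
      rw [Finset.sum_range_sub' g]
      simp [hg]
    simp_rw [heq]
    have h1 : Tendsto g atTop (nhds 0) := by
      rw [hg]
      simp_rw [one_div]
      apply Tendsto.inv_tendsto_atTop
      exact tendsto_atTop_add_const_left _ c tendsto_natCast_atTop_atTop
    simpa using tendsto_const_nhds.sub h1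
  have hle : ∀ k : ℕ, g k - g (k+1) ≤ 1/(c+k)^2 := by
    intro k
    rw [hdiff k, div_le_div_iff₀ (by positivity) (by positivity)]
    nlinarith [hck k, hpos k]
  have hsum2 : Summable (fun k : ℕ => 1 / (c+k)^2) := by
    refine Summable.of_nonneg_of_le (fun k => by positivity) (fun k => ?_)
      (htel.summable.mul_left 2)
    rw [hdiff k, mul_one_div, div_le_div_iff₀ (by positivity) (by positivity)]
    nlinarith [hck k, hpos k]
  calc 1/c = ∑' k : ℕ, (g k - g (k+1)) := htel.tsum_eq.symm
    _ ≤ ∑' k : ℕ, 1 / (c+k)^2 := Summable.tsum_le_tsum hle htel.summable hsum2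

lemma stmt7_sqrt_atTop : Tendsto (fun i : ℕ => Real.sqrt i) atTop atTop := by
  apply tendsto_atTop_atTop_of_monotone
  · intro a b hab; exact Real.sqrt_le_sqrt (by exact_mod_cast hab)
  · intro b
    refine ⟨⌈b^2⌉₊, ?_⟩
    calc b ≤ Real.sqrt (b^2) := by rw [Real.sqrt_sq_eq_abs]; exact le_abs_self b
      _ ≤ Real.sqrt (⌈b^2⌉₊) := Real.sqrt_le_sqrt (Nat.le_ceil _)

/-- For `xᵢ(t) = √i · tⁱ` one has `‖xᵢ‖_{L²} ≤ 1/√2`, the components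
`(A xᵢ)_j = √i/(i+j)` (1-based `j`; with 0-based `j : ℕ` this is `√i/(i+j+1)`) tend to `0`
as `i → ∞`, yet `‖A xᵢ‖² = i · ∑_{k=i+1}^∞ 1/k² ≥ i/(i+1)`.  Consequently `(A xᵢ)` has no
norm-convergent subsequence and the Hausdorff moment operator `A` is not compact. -/
theorem stmt7
    (A : Lp ℝ 2 (volume.restrict (Set.Ioo (0:ℝ) 1)) →L[ℝ] lp (fun _ : ℕ => ℝ) 2)
    (hA : ∀ (x : Lp ℝ 2 (volume.restrict (Set.Ioo (0:ℝ) 1))) (j : ℕ),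
      (A x : ℕ → ℝ) j = ∫ t in Set.Ioo (0:ℝ) 1, t ^ j * x t)
    (x : ℕ → Lp ℝ 2 (volume.restrict (Set.Ioo (0:ℝ) 1)))
    (hx : ∀ i : ℕ, (x i : ℝ → ℝ) =ᵐ[volume.restrict (Set.Ioo (0:ℝ) 1)]
      fun t => Real.sqrt i * t ^ i) :
    (∀ i : ℕ, 1 ≤ i → ‖x i‖ ≤ 1 / Real.sqrt 2) ∧
    (∀ i j : ℕ, (A (x i) : ℕ → ℝ) j = Real.sqrt i / ((i : ℝ) + (j : ℝ) + 1)) ∧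
    (∀ j : ℕ, Tendsto (fun i : ℕ => (A (x i) : ℕ → ℝ) j) atTop (nhds 0)) ∧
    (∀ i : ℕ, ‖A (x i)‖ ^ 2 = (i : ℝ) * ∑' k : ℕ, 1 / ((i : ℝ) + 1 + (k : ℝ)) ^ 2) ∧
    (∀ i : ℕ, (i : ℝ) / ((i : ℝ) + 1) ≤ ‖A (x i)‖ ^ 2) ∧
    (¬ ∃ (φ : ℕ → ℕ) (L : lp (fun _ : ℕ => ℝ) 2), StrictMono φ ∧
      Tendsto (fun n : ℕ => A (x (φ n))) atTop (nhds L)) ∧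
    ¬ IsCompactOperator (A : Lp ℝ 2 (volume.restrict (Set.Ioo (0:ℝ) 1)) →
        lp (fun _ : ℕ => ℝ) 2) := by
  -- component formula
  have hcomp : ∀ i j : ℕ, (A (x i) : ℕ → ℝ) j = Real.sqrt i / ((i : ℝ) + (j : ℝ) + 1) := by
    intro i j
    rw [hA]
    have h1 : (fun t => t ^ j * (x i : ℝ → ℝ) t) =ᵐ[volume.restrict (Set.Ioo (0:ℝ) 1)]
        fun t => Real.sqrt i * t ^ (i + j) := by
      filter_upwards [hx i] with t ht
      rw [ht, pow_add]
      ring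
    rw [integral_congr_ae h1, integral_const_mul, stmt7_intpow]
    push_cast
    rw [mul_one_div]
  -- L² norm of x i
  have hxnorm : ∀ i : ℕ, ‖x i‖ ^ 2 = (i:ℝ) / (2*(i:ℝ)+1) := by
    intro i
    rw [← real_inner_self_eq_norm_sq, MeasureTheory.L2.inner_def]
    have h1 : (fun t => (inner ℝ ((x i : ℝ → ℝ) t) ((x i : ℝ → ℝ) t) : ℝ))
        =ᵐ[volume.restrict (Set.Ioo (0:ℝ) 1)] fun t => (i:ℝ) * t ^ (2*i) := by
      filter_upwards [hx i] with t ht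
      rw [RCLike.inner_apply, conj_trivial, ht]
      rw [two_mul, pow_add]
      have : Real.sqrt i * Real.sqrt i = (i:ℝ) := Real.mul_self_sqrt (Nat.cast_nonneg i)
      nlinarith [this]
    rw [integral_congr_ae h1, integral_const_mul, stmt7_intpow]
    push_cast
    rw [mul_one_div]
  -- ℓ² norm of A (x i)
  have hnormA : ∀ i : ℕ, ‖A (x i)‖ ^ 2 = (i : ℝ) * ∑' k : ℕ, 1 / ((i : ℝ) + 1 + (k : ℝ)) ^ 2 := by
    intro i
    rw [← real_inner_self_eq_norm_sq, lp.inner_eq_tsum]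
    have hterm : ∀ k : ℕ, (inner ℝ ((A (x i) : ℕ → ℝ) k) ((A (x i) : ℕ → ℝ) k) : ℝ)
        = (i:ℝ) * (1/((i:ℝ)+1+(k:ℝ))^2) := by
      intro k
      rw [RCLike.inner_apply, conj_trivial, hcomp i k]
      rw [div_mul_div_comm, Real.mul_self_sqrt (Nat.cast_nonneg i), mul_one_div]
      congr 1
      ring
    rw [tsum_congr hterm, tsum_mul_left]
  -- lower bound
  have hlow : ∀ i : ℕ, (i : ℝ) / ((i : ℝ) + 1) ≤ ‖A (x i)‖ ^ 2 := by
    intro i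
    rw [hnormA i]
    calc (i:ℝ)/((i:ℝ)+1) = (i:ℝ) * (1/((i:ℝ)+1)) := by rw [mul_one_div]
      _ ≤ (i:ℝ) * ∑' k : ℕ, 1 / ((i : ℝ) + 1 + (k : ℝ)) ^ 2 :=
          mul_le_mul_of_nonneg_left (stmt7_tel i) (Nat.cast_nonneg i)
  -- componentwise convergence to 0
  have hten : ∀ j : ℕ, Tendsto (fun i : ℕ => (A (x i) : ℕ → ℝ) j) atTop (nhds 0) := by
    intro j
    refine squeeze_zero (fun i => ?_) (fun i => ?_) stmt7_sqrt_atTop.inv_tendsto_atTop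
    · rw [hcomp i j]
      positivity
    · rw [hcomp i j]
      rcases Nat.eq_zero_or_pos i with hi | hi
      · subst hi; simp
      · have h0 : 0 < Real.sqrt i := Real.sqrt_pos.2 (by exact_mod_cast hi)
        have hp : (0:ℝ) < (i:ℝ) + j + 1 := by positivity
        rw [div_le_iff₀ hp, Pi.inv_apply, inv_mul_eq_div, le_div_iff₀ h0,
          Real.mul_self_sqrt (Nat.cast_nonneg i)]
        have : (0:ℝ) ≤ (j:ℝ) := Nat.cast_nonneg j
        linarith
  -- norm bound for x i (all i)
  have hxball : ∀ i : ℕ, ‖x i‖ ≤ 1 := by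
    intro i
    have h1 : (i:ℝ)/(2*(i:ℝ)+1) ≤ 1 := by
      rw [div_le_one (by positivity)]
      have : (0:ℝ) ≤ (i:ℝ) := Nat.cast_nonneg i
      linarith
    nlinarith [norm_nonneg (x i), hxnorm i]
  -- no convergent subsequence
  have hnosub : ¬ ∃ (φ : ℕ → ℕ) (L : lp (fun _ : ℕ => ℝ) 2), StrictMono φ ∧
      Tendsto (fun n : ℕ => A (x (φ n))) atTop (nhds L) := by
    rintro ⟨φ, L, hφ, hconv⟩
    have hLnorm : Tendsto (fun n => ‖A (x (φ n)) - L‖) atTop (nhds 0) := by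
      have h := (hconv.sub (tendsto_const_nhds (x := L))).norm
      simpa using h
    have hcompL : ∀ j : ℕ, Tendsto (fun n => (A (x (φ n)) : ℕ → ℝ) j) atTop
        (nhds ((L : ℕ → ℝ) j)) := by
      intro j
      rw [← tendsto_sub_nhds_zero_iff]
      refine squeeze_zero_norm (fun n => ?_) hLnorm
      have h1 : (A (x (φ n)) : ℕ → ℝ) j - (L : ℕ → ℝ) j
          = ((A (x (φ n)) - L : lp (fun _ : ℕ => ℝ) 2) : ℕ → ℝ) j := by
        simp
      rw [h1]
      exact lp.norm_apply_le_norm two_ne_zero _ j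
    have hzero : ∀ j : ℕ, (L : ℕ → ℝ) j = 0 := by
      intro j
      exact tendsto_nhds_unique (hcompL j) ((hten j).comp hφ.tendsto_atTop)
    have hL : L = 0 := by
      apply lp.ext
      funext j
      rw [hzero j]
      simp
    have hnorm0 : Tendsto (fun n => ‖A (x (φ n))‖) atTop (nhds 0) := by
      have := hconv.norm
      rw [hL] at this
      simpa using this
    obtain ⟨n, hn1, hn2⟩ := ((eventually_ge_atTop 1).and
      (hnorm0.eventually_lt_const (by norm_num : (0:ℝ) < 1/2))).exists
    have hφn : (1:ℝ) ≤ (φ n : ℝ) := by exact_mod_cast le_trans hn1 hφ.le_apply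
    have hlb : (1:ℝ)/2 ≤ ‖A (x (φ n))‖ ^ 2 := by
      refine le_trans ?_ (hlow (φ n))
      rw [div_le_div_iff₀ two_pos (by positivity)]
      linarith
    nlinarith [norm_nonneg (A (x (φ n)))]
  refine ⟨?_, hcomp, hten, hnormA, hlow, hnosub, ?_⟩
  · -- norm bound 1/√2
    intro i hi
    have hi' : (1:ℝ) ≤ (i:ℝ) := by exact_mod_cast hi
    have h2 : ‖x i‖ ^ 2 ≤ 1/2 := by
      rw [hxnorm i, div_le_div_iff₀ (by positivity) two_pos]
      linarith
    calc ‖x i‖ = Real.sqrt (‖x i‖ ^ 2) := (Real.sqrt_sq (norm_nonneg _)).symm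
      _ ≤ Real.sqrt (1/2) := Real.sqrt_le_sqrt h2
      _ = 1 / Real.sqrt 2 := by
          rw [one_div, Real.sqrt_inv, one_div]
  · -- not compact
    intro hcompact
    have hc2 : IsCompactOperator
        ((A.toLinearMap : Lp ℝ 2 (volume.restrict (Set.Ioo (0:ℝ) 1)) →ₗ[ℝ]
          lp (fun _ : ℕ => ℝ) 2) : _ → _) := hcompact
    have hK : IsCompact (closure ((A.toLinearMap : _ → _) '' Metric.closedBall 0 1)) :=
      hc2.isCompact_closure_image_closedBall 1
    have hmem : ∀ i : ℕ, A (x i) ∈ closure ((A.toLinearMap : _ → _) '' Metric.closedBall 0 1) := by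
      intro i
      refine subset_closure ⟨x i, ?_, rfl⟩
      rw [Metric.mem_closedBall, dist_zero_right]
      exact hxball i
    obtain ⟨L, hLmem, φ, hφ, hconv⟩ := hK.tendsto_subseq hmem
    exact hnosub ⟨φ, L, hφ, hconv⟩
end

section
/- Let A : X → Y be a bounded linear operator between Hilbert spaces with non-closed range. Then the equation Ax = y is ill-posed of type I (i.e. R(A) contains an infinite-dimensional closed subspace) if and only if there exist D₁ > 0 and an infinite-dimensional closed subspace Y₁ of Y such that ‖y‖_Y ≤ D₁‖A*y‖_X for all y ∈ Y₁. -/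
open ContinuousLinearMap in
/-- If a closed subspace `Z` is contained in the range of `A`, then `A*` is bounded
below on `Z`. -/
lemma key_lemma {X Y : Type*} [NormedAddCommGroup X] [InnerProductSpace ℝ X] [CompleteSpace X]
    [NormedAddCommGroup Y] [InnerProductSpace ℝ Y] [CompleteSpace Y]
    (A : X →L[ℝ] Y) (Z : Submodule ℝ Y) (hcl : IsClosed (Z : Set Y))
    (hle : Z ≤ LinearMap.range (A : X →ₗ[ℝ] Y)) :
    ∃ C > 0, ∀ z ∈ Z, ‖z‖ ≤ C * ‖ContinuousLinearMap.adjoint A z‖ := by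
  haveI : CompleteSpace Z := hcl.completeSpace_coe
  set M : Submodule ℝ X := Z.comap (A : X →ₗ[ℝ] Y) with hM
  have hMcl : IsClosed (M : Set X) := hcl.preimage A.continuous
  haveI : CompleteSpace M := hMcl.completeSpace_coe
  set A' : M →L[ℝ] Z := (A.comp M.subtypeL).codRestrict Z (fun m => m.2) with hA'
  have hsurj : Function.Surjective A' := by
    rintro ⟨z, hz⟩
    obtain ⟨x, hx⟩ := hle hz
    refine ⟨⟨x, ?_⟩, ?_⟩
    · simp only [hM, Submodule.mem_comap, LinearMap.coe_coe, hx]; exact hz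
    · apply Subtype.ext
      exact hx
  obtain ⟨C, hC, hpre⟩ := A'.exists_preimage_norm_le hsurj
  refine ⟨C, hC, fun z hz => ?_⟩
  obtain ⟨m, hm, hnorm⟩ := hpre ⟨z, hz⟩
  have hAm : A (m : X) = z := congrArg Subtype.val hm
  rcases eq_or_ne z 0 with rfl | hz0
  · simp [mul_nonneg hC.le (norm_nonneg _)]
  have h2 : ‖z‖ * ‖z‖ = inner ℝ (ContinuousLinearMap.adjoint A z) (m : X) := by
    rw [ContinuousLinearMap.adjoint_inner_left, hAm, real_inner_self_eq_norm_mul_norm]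
  have h3 : (inner ℝ (ContinuousLinearMap.adjoint A z) (m : X) : ℝ)
      ≤ ‖ContinuousLinearMap.adjoint A z‖ * ‖(m : X)‖ := real_inner_le_norm _ _
  have h4 : ‖(m : X)‖ ≤ C * ‖z‖ := hnorm
  have h1 : ‖z‖ * ‖z‖ ≤ (C * ‖ContinuousLinearMap.adjoint A z‖) * ‖z‖ := by
    calc ‖z‖ * ‖z‖ = inner ℝ (ContinuousLinearMap.adjoint A z) (m : X) := h2
      _ ≤ ‖ContinuousLinearMap.adjoint A z‖ * ‖(m : X)‖ := h3
      _ ≤ ‖ContinuousLinearMap.adjoint A z‖ * (C * ‖z‖) :=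
          mul_le_mul_of_nonneg_left h4 (norm_nonneg _)
      _ = (C * ‖ContinuousLinearMap.adjoint A z‖) * ‖z‖ := by ring
  exact le_of_mul_le_mul_right h1 (norm_pos_iff.2 hz0)

/-- If `B` is bounded below on a closed subspace `Y₁`, then `B '' Y₁` is a closed
subspace, infinite-dimensional if `Y₁` is. -/
lemma map_lemma {X Y : Type*} [NormedAddCommGroup X] [InnerProductSpace ℝ X] [CompleteSpace X]
    [NormedAddCommGroup Y] [InnerProductSpace ℝ Y] [CompleteSpace Y]
    (B : Y →L[ℝ] X) (Y₁ : Submodule ℝ Y) (hcl : IsClosed (Y₁ : Set Y))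
    (D : ℝ) (hD : 0 < D) (h : ∀ y ∈ Y₁, ‖y‖ ≤ D * ‖B y‖) :
    IsClosed ((Y₁.map (B : Y →ₗ[ℝ] X) : Submodule ℝ X) : Set X) ∧
      (¬ FiniteDimensional ℝ Y₁ → ¬ FiniteDimensional ℝ (Y₁.map (B : Y →ₗ[ℝ] X))) := by
  haveI : CompleteSpace Y₁ := hcl.completeSpace_coe
  set B' : Y₁ →L[ℝ] X := B.comp Y₁.subtypeL with hB'
  have hbel : ∀ m : Y₁, ‖m‖ ≤ (⟨D, hD.le⟩ : NNReal) * ‖B' m‖ := fun m => h m m.2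
  have hanti : AntilipschitzWith ⟨D, hD.le⟩ B' := B'.antilipschitz_of_bound hbel
  have hrange : Set.range B' = ((Y₁.map (B : Y →ₗ[ℝ] X) : Submodule ℝ X) : Set X) := by
    ext x
    simp only [hB', SetLike.mem_coe, Submodule.mem_map, Set.mem_range,
      ContinuousLinearMap.coe_comp', Function.comp_apply, Submodule.coe_subtypeL',
      LinearMap.coe_coe]
    constructor
    · rintro ⟨⟨y, hy⟩, rfl⟩; exact ⟨y, hy, rfl⟩
    · rintro ⟨y, hy, rfl⟩; exact ⟨⟨y, hy⟩, rfl⟩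
  constructor
  · rw [← hrange]
    exact hanti.isClosed_range B'.uniformContinuous
  · intro hinf hfin
    apply hinf
    have hinj : Function.Injective ((B : Y →ₗ[ℝ] X).comp Y₁.subtype) := hanti.injective
    have hr : LinearMap.range ((B : Y →ₗ[ℝ] X).comp Y₁.subtype)
        = Y₁.map (B : Y →ₗ[ℝ] X) := by
      rw [LinearMap.range_comp, Submodule.range_subtype]
    have e := LinearEquiv.ofInjective _ hinj
    rw [hr] at e
    exact e.symm.finiteDimensional




/-- Let `A : X → Y` be a bounded linear operator between Hilbert spaces with
non-closed range.  Then the range of `A` contains an infinite-dimensional closed subspace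
(ill-posedness of type I) if and only if there exist `D₁ > 0` and an infinite-dimensional
closed subspace `Y₁ ⊆ Y` with `‖y‖ ≤ D₁ ‖A* y‖` for all `y ∈ Y₁`. -/
theorem stmt9 {X Y : Type*} [NormedAddCommGroup X] [InnerProductSpace ℝ X] [CompleteSpace X]
    [NormedAddCommGroup Y] [InnerProductSpace ℝ Y] [CompleteSpace Y]
    (A : X →L[ℝ] Y)
    (hnc : ¬ IsClosed ((LinearMap.range (A : X →ₗ[ℝ] Y) : Submodule ℝ Y) : Set Y)) :
    (∃ Z : Submodule ℝ Y, IsClosed (Z : Set Y) ∧ ¬ FiniteDimensional ℝ Z ∧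
        Z ≤ LinearMap.range (A : X →ₗ[ℝ] Y)) ↔
      (∃ (D₁ : ℝ) (Y₁ : Submodule ℝ Y), 0 < D₁ ∧ IsClosed (Y₁ : Set Y) ∧
        ¬ FiniteDimensional ℝ Y₁ ∧
        ∀ y ∈ Y₁, ‖y‖ ≤ D₁ * ‖ContinuousLinearMap.adjoint A y‖) := by
  constructor
  · rintro ⟨Z, hZcl, hZinf, hZle⟩
    obtain ⟨C, hC, hbd⟩ := key_lemma A Z hZcl hZle
    exact ⟨C, Z, hC, hZcl, hZinf, hbd⟩
  · rintro ⟨D₁, Y₁, hD, hY₁cl, hY₁inf, hbd⟩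
    set B := ContinuousLinearMap.adjoint A with hB
    obtain ⟨hX₁cl, hX₁inf⟩ := map_lemma B Y₁ hY₁cl D₁ hD hbd
    set X₁ : Submodule ℝ X := Y₁.map (B : Y →ₗ[ℝ] X) with hX₁
    have hX₁le : X₁ ≤ LinearMap.range (B : Y →ₗ[ℝ] X) := LinearMap.map_le_range
    obtain ⟨c, hc, hbd2⟩ := key_lemma B X₁ hX₁cl hX₁le
    have hbd3 : ∀ x ∈ X₁, ‖x‖ ≤ c * ‖A x‖ := by
      intro x hx
      have := hbd2 x hx
      rwa [hB, ContinuousLinearMap.adjoint_adjoint] at this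
    obtain ⟨hZcl, hZinf⟩ := map_lemma A X₁ hX₁cl c hc hbd3
    exact ⟨X₁.map (A : X →ₗ[ℝ] Y), hZcl, hZinf (hX₁inf hY₁inf), LinearMap.map_le_range⟩
end
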